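/- Let N_0 < N and split ℝ^N = ℝ^{N_0} × ℝ^{N−N_0}. Let h : ℝ^{N−N_0} → ℝ be 1-Lipschitz with ‖h‖_∞ ≤ 1 and h constant outside the closed unit ball of ℝ^{N−N_0} in the radial direction. Let φ : ℝ → [0,1] be the (4/L)-Lipschitz cutoff equal to 1 on [0, L²/2 − L/4], affine on (L²/2 − L/4, L²/2] and 0 beyond, and ψ : ℝ → [0,1] the 1-Lipschitz cutoff equal to 1 on [0,1], affine on (1,2], and 0 beyond. Define F(y,ỹ) = φ(|y|)ψ(|ỹ|)h(ỹ). Then: (i) F vanishes outside the box B = [−L²/2, L²/2]^{N_0} × [−2,2]^{N−N_0}; (ii) F = h on the core S = [−L²/2 + L/4, L²/2 − L/4]^{N_0} × [−1,1]^{N−N_0}; (iii) ‖F‖_∞ ≤ 1; and (iv) |F(y,ỹ)| ≤ dist((y,ỹ), ∂B) whenever L ≥ 4. -/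
import Mathlib


open Metric

/-- The `(4/L)`-Lipschitz cutoff `φ`. -/
noncomputable def phiCut (L r : ℝ) : ℝ :=
  if |r| ≤ L ^ 2 / 2 - L / 4 then 1
  else if |r| ≤ L ^ 2 / 2 then 1 - (4 / L) * (|r| - L ^ 2 / 2 + L / 4)
  else 0

/-- The `1`-Lipschitz cutoff `ψ`. -/
noncomputable def psiCut (r : ℝ) : ℝ :=
  if |r| ≤ 1 then 1
  else if |r| ≤ 2 then 2 - |r|
  else 0

lemma phiCut_zero {L r : ℝ} (hL : 0 < L) (hr : L ^ 2 / 2 < |r|) : phiCut L r = 0 := by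
  unfold phiCut
  rw [if_neg (by linarith), if_neg (by linarith)]

lemma psiCut_zero {r : ℝ} (hr : 2 < |r|) : psiCut r = 0 := by
  unfold psiCut
  rw [if_neg (by linarith), if_neg (by linarith)]

lemma phiCut_one {L r : ℝ} (hr : |r| ≤ L ^ 2 / 2 - L / 4) : phiCut L r = 1 := by
  unfold phiCut; rw [if_pos hr]

lemma psiCut_one {r : ℝ} (hr : |r| ≤ 1) : psiCut r = 1 := by
  unfold psiCut; rw [if_pos hr]

lemma phiCut_nonneg {L : ℝ} (r : ℝ) (hL : 0 < L) : 0 ≤ phiCut L r := by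
  unfold phiCut
  split_ifs with h1 h2
  · norm_num
  · rw [sub_nonneg, div_mul_eq_mul_div, div_le_one hL]
    nlinarith
  · exact le_rfl

lemma phiCut_le_one {L : ℝ} (r : ℝ) (hL : 0 < L) : phiCut L r ≤ 1 := by
  unfold phiCut
  split_ifs with h1 h2
  · exact le_rfl
  · push_neg at h1
    have : 0 ≤ (4 / L) * (|r| - L ^ 2 / 2 + L / 4) :=
      mul_nonneg (by positivity) (by linarith)
    linarith
  · norm_num

lemma psiCut_nonneg (r : ℝ) : 0 ≤ psiCut r := by
  unfold psiCut
  split_ifs with h1 h2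
  · norm_num
  · linarith
  · exact le_rfl

lemma psiCut_le_one (r : ℝ) : psiCut r ≤ 1 := by
  unfold psiCut
  split_ifs with h1 h2
  · exact le_rfl
  · push_neg at h1; linarith
  · norm_num

lemma phiCut_le {L r : ℝ} (hL : 4 ≤ L) (hr0 : 0 ≤ r) (hr : r ≤ L ^ 2 / 2) :
    phiCut L r ≤ L ^ 2 / 2 - r := by
  have hL0 : (0:ℝ) < L := by linarith
  unfold phiCut
  rw [abs_of_nonneg hr0]
  split_ifs with h1
  · linarith
  · rw [div_mul_eq_mul_div, sub_le_comm, le_div_iff₀ hL0]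
    nlinarith

lemma psiCut_le {r : ℝ} (hr0 : 0 ≤ r) (hr : r ≤ 2) : psiCut r ≤ 2 - r := by
  unfold psiCut
  rw [abs_of_nonneg hr0]
  split_ifs with h1
  · linarith
  · linarith

/-- Properties of the building block `F(y,ỹ) = φ(|y|) ψ(|ỹ|) h(ỹ)`: it vanishes outside
the box `B`, equals `h` on the core, is bounded by `1`, and decays linearly to `0` near
`∂B` (for `L ≥ 4`). The norms are the sup norms consistent with the box geometry. -/
theorem stmt_18 (N₀ N₁ : ℕ) (hN₁ : 0 < N₁) (L : ℝ) (hL : 8 ≤ L)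
    (h : (Fin N₁ → ℝ) → ℝ) (hh : LipschitzWith 1 h) (hhb : ∀ z, |h z| ≤ 1)
    (hrad : ∀ z : Fin N₁ → ℝ, 1 ≤ ‖z‖ → h z = h (‖z‖⁻¹ • z)) :
    ∀ (F : (Fin N₀ → ℝ) × (Fin N₁ → ℝ) → ℝ),
      F = (fun p => phiCut L ‖p.1‖ * psiCut ‖p.2‖ * h p.2) →
    ∀ (B : Set ((Fin N₀ → ℝ) × (Fin N₁ → ℝ))),
      B = {p | ‖p.1‖ ≤ L ^ 2 / 2 ∧ ‖p.2‖ ≤ 2} →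
      (∀ p, p ∉ B → F p = 0) ∧
      (∀ p : (Fin N₀ → ℝ) × (Fin N₁ → ℝ),
        ‖p.1‖ ≤ L ^ 2 / 2 - L / 4 → ‖p.2‖ ≤ 1 → F p = h p.2) ∧
      (∀ p, |F p| ≤ 1) ∧
      (4 ≤ L → ∀ p, |F p| ≤ infDist p (frontier B)) := by
  intro F hF B hB
  have hL0 : (0:ℝ) < L := by linarith
  have hL4 : (4:ℝ) ≤ L := by linarith
  subst hF; subst hB
  haveI : Nonempty (Fin N₁) := Fin.pos_iff_nonempty.mp hN₁
  have hzero : ∀ p : (Fin N₀ → ℝ) × (Fin N₁ → ℝ),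
      ¬(‖p.1‖ ≤ L ^ 2 / 2 ∧ ‖p.2‖ ≤ 2) →
      phiCut L ‖p.1‖ * psiCut ‖p.2‖ * h p.2 = 0 := by
    intro p hp
    rw [not_and_or, not_le, not_le] at hp
    rcases hp with h1 | h2
    · rw [phiCut_zero hL0 (by rwa [abs_of_nonneg (norm_nonneg _)]), zero_mul, zero_mul]
    · rw [psiCut_zero (by rwa [abs_of_nonneg (norm_nonneg _)]), mul_zero, zero_mul]
  have habsF : ∀ p : (Fin N₀ → ℝ) × (Fin N₁ → ℝ),
      |phiCut L ‖p.1‖ * psiCut ‖p.2‖ * h p.2| ≤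
        phiCut L ‖p.1‖ * psiCut ‖p.2‖ := by
    intro p
    rw [abs_mul, abs_of_nonneg (mul_nonneg (phiCut_nonneg _ hL0) (psiCut_nonneg _))]
    calc phiCut L ‖p.1‖ * psiCut ‖p.2‖ * |h p.2|
        ≤ phiCut L ‖p.1‖ * psiCut ‖p.2‖ * 1 := by
          gcongr
          · exact mul_nonneg (phiCut_nonneg _ hL0) (psiCut_nonneg _)
          · exact hhb _
      _ = phiCut L ‖p.1‖ * psiCut ‖p.2‖ := mul_one _
  refine ⟨fun p hp => hzero p hp, ?_, ?_, ?_⟩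
  · intro p hp1 hp2
    simp only
    rw [phiCut_one (by rwa [abs_of_nonneg (norm_nonneg _)]),
        psiCut_one (by rwa [abs_of_nonneg (norm_nonneg _)]), one_mul, one_mul]
  · intro p
    calc |phiCut L ‖p.1‖ * psiCut ‖p.2‖ * h p.2|
        ≤ phiCut L ‖p.1‖ * psiCut ‖p.2‖ := habsF p
      _ ≤ 1 * 1 := by
          gcongr
          · exact psiCut_nonneg _
          · exact phiCut_le_one _ hL0
          · exact psiCut_le_one _
      _ = 1 := one_mul 1
  · intro _ p
    -- the frontier is nonempty
    set q₀ : (Fin N₀ → ℝ) × (Fin N₁ → ℝ) := (0, fun _ => (2:ℝ)) with hq₀def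
    have hq₀ : q₀ ∈ frontier {p : (Fin N₀ → ℝ) × (Fin N₁ → ℝ) |
        ‖p.1‖ ≤ L ^ 2 / 2 ∧ ‖p.2‖ ≤ 2} := by
      constructor
      · apply subset_closure
        constructor
        · simp only [hq₀def, norm_zero]; positivity
        · simp only [hq₀def]
          rw [pi_norm_const]
          norm_num
      · intro hint
        rw [mem_interior_iff_mem_nhds, Metric.mem_nhds_iff] at hint
        obtain ⟨ε, hε, hball⟩ := hint
        have hmem : ((0 : Fin N₀ → ℝ), fun _ => 2 + ε / 2) ∈
            ball q₀ ε := by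
          rw [mem_ball, Prod.dist_eq]
          have h2d : dist (fun _ => (2:ℝ) + ε / 2 : Fin N₁ → ℝ) (fun _ => (2:ℝ)) = ε / 2 := by
            rw [dist_pi_const, Real.dist_eq,
              show (2:ℝ) + ε / 2 - 2 = ε / 2 by ring, abs_of_nonneg (by linarith)]
          simp only [hq₀def]
          rw [dist_self, h2d, max_eq_right (by linarith)]
          linarith
        have := (hball hmem).2
        rw [pi_norm_const] at this
        have : |(2 : ℝ) + ε / 2| ≤ 2 := this
        rw [abs_of_nonneg (by linarith)] at this
        linarith
    have hne : (frontier {p : (Fin N₀ → ℝ) × (Fin N₁ → ℝ) |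
        ‖p.1‖ ≤ L ^ 2 / 2 ∧ ‖p.2‖ ≤ 2}).Nonempty := ⟨q₀, hq₀⟩
    -- points in the frontier have a big coordinate
    have hbig : ∀ q ∈ frontier {p : (Fin N₀ → ℝ) × (Fin N₁ → ℝ) |
        ‖p.1‖ ≤ L ^ 2 / 2 ∧ ‖p.2‖ ≤ 2}, L ^ 2 / 2 ≤ ‖q.1‖ ∨ 2 ≤ ‖q.2‖ := by
      intro q hq
      by_contra hc
      push_neg at hc
      apply hq.2
      have hsub : {x : (Fin N₀ → ℝ) × (Fin N₁ → ℝ) | ‖x.1‖ < L ^ 2 / 2 ∧ ‖x.2‖ < 2} ⊆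
          interior {p : (Fin N₀ → ℝ) × (Fin N₁ → ℝ) | ‖p.1‖ ≤ L ^ 2 / 2 ∧ ‖p.2‖ ≤ 2} :=
        interior_maximal (fun x hx => ⟨le_of_lt hx.1, le_of_lt hx.2⟩)
          (IsOpen.and (isOpen_lt continuous_fst.norm continuous_const)
            (isOpen_lt continuous_snd.norm continuous_const))
      exact hsub ⟨hc.1, hc.2⟩
    -- main bound
    apply le_of_not_gt
    rw [infDist_lt_iff hne]
    rintro ⟨y, hy, hdy⟩
    beta_reduce at hdy
    rcases hbig y hy with hb | hb
    · by_cases hp1 : ‖p.1‖ ≤ L ^ 2 / 2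
      · have h1 : |phiCut L ‖p.1‖ * psiCut ‖p.2‖ * h p.2| ≤ L ^ 2 / 2 - ‖p.1‖ := by
          calc |phiCut L ‖p.1‖ * psiCut ‖p.2‖ * h p.2|
              ≤ phiCut L ‖p.1‖ * psiCut ‖p.2‖ := habsF p
            _ ≤ phiCut L ‖p.1‖ * 1 := by
                gcongr
                · exact phiCut_nonneg _ hL0
                · exact psiCut_le_one _
            _ = phiCut L ‖p.1‖ := mul_one _
            _ ≤ L ^ 2 / 2 - ‖p.1‖ := phiCut_le hL4 (norm_nonneg _) hp1
        have h2 : L ^ 2 / 2 - ‖p.1‖ ≤ dist p y := by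
          calc L ^ 2 / 2 - ‖p.1‖ ≤ ‖y.1‖ - ‖p.1‖ := by linarith
            _ ≤ ‖y.1 - p.1‖ := norm_sub_norm_le _ _
            _ = dist p.1 y.1 := by rw [dist_eq_norm, norm_sub_rev]
            _ ≤ dist p y := by rw [Prod.dist_eq]; exact le_max_left _ _
        linarith
      · rw [hzero p (fun hc => hp1 hc.1), abs_zero] at hdy
        exact absurd hdy (not_lt.mpr dist_nonneg)
    · by_cases hp2 : ‖p.2‖ ≤ 2
      · have h1 : |phiCut L ‖p.1‖ * psiCut ‖p.2‖ * h p.2| ≤ 2 - ‖p.2‖ := by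
          calc |phiCut L ‖p.1‖ * psiCut ‖p.2‖ * h p.2|
              ≤ phiCut L ‖p.1‖ * psiCut ‖p.2‖ := habsF p
            _ ≤ 1 * psiCut ‖p.2‖ := by
                gcongr
                · exact psiCut_nonneg _
                · exact phiCut_le_one _ hL0
            _ = psiCut ‖p.2‖ := one_mul _
            _ ≤ 2 - ‖p.2‖ := psiCut_le (norm_nonneg _) hp2
        have h2 : 2 - ‖p.2‖ ≤ dist p y := by
          calc (2:ℝ) - ‖p.2‖ ≤ ‖y.2‖ - ‖p.2‖ := by linarith
            _ ≤ ‖y.2 - p.2‖ := norm_sub_norm_le _ _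
            _ = dist p.2 y.2 := by rw [dist_eq_norm, norm_sub_rev]
            _ ≤ dist p y := by rw [Prod.dist_eq]; exact le_max_right _ _
        linarith
      · rw [hzero p (fun hc => hp2 hc.2), abs_zero] at hdy
        exact absurd hdy (not_lt.mpr dist_nonneg)
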